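/- arXiv:2007.14115 — 2 statements merged into one kernel-verified Lean document; each statement's English description precedes it below -/
import Mathlib

section
/- Let s, t, α be positive integers with 2 ≤ α, α < s and α < t, and let G be a finite abelian group with line set 𝓛 making (G,𝓛) a proper partial geometry pg(s,t,α) admitting G as an abelian Singer group, such that the pair is of rigid type (axioms (i)–(vi) of the encoding). Then (s + t − α + 1) divides (s+1)(t+1). -/
/-- Encoding of a partial geometry `pg(s,t,α)` whose point set is the abelian group `G`,
admitting `G` (acting by translation) as an abelian Singer group; the lines are the finite
subsets of `G` collected in `𝓛`.  Axioms (i)–(v). -/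
structure IsPGSinger (G : Type*) [CommGroup G] [DecidableEq G]
    (𝓛 : Set (Finset G)) (s t α : ℕ) : Prop where
  /-- (i) every line has exactly `s+1` points -/
  line_card : ∀ L ∈ 𝓛, L.card = s + 1
  /-- (ii) every point lies on exactly `t+1` lines -/
  point_deg : ∀ x : G, {L | L ∈ 𝓛 ∧ x ∈ L}.ncard = t + 1
  /-- (iii) two distinct lines share at most one point -/
  line_inter : ∀ L ∈ 𝓛, ∀ M ∈ 𝓛, L ≠ M → ((L : Set G) ∩ (M : Set G)).ncard ≤ 1
  /-- (iv) for a non-incident point–line pair `(x,L)`, exactly `α` lines through `x` meet `L` -/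
  alpha_ax : ∀ x : G, ∀ L ∈ 𝓛, x ∉ L →
    {M | M ∈ 𝓛 ∧ x ∈ M ∧ ∃ y ∈ L, y ∈ M}.ncard = α
  /-- (v) the line set is closed under translation by elements of `G` -/
  translate : ∀ g : G, ∀ L ∈ 𝓛, L.image (fun y => g * y) ∈ 𝓛

/-- (vi) The pair `(S,G)` is of rigid type: every line has trivial stabilizer in `G`. -/
def RigidType (G : Type*) [CommGroup G] [DecidableEq G] (𝓛 : Set (Finset G)) : Prop :=
  ∀ g : G, ∀ L ∈ 𝓛, L.image (fun y => g * y) = L → g = 1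

/-!
Write `r x y` for the number of lines through both `x` and `y`. Counting flags gives
`∑ y, r x y * r y z = β * r x z + α (t + 1)` with `β = s + t + 1 - α` in every partial geometry,
and translation invariance turns `E g = r 1 g` into a function on `G` with
`E ⋆ E = β E + α (t + 1)`. Hence every nontrivial Fourier coefficient of `E` is `0` or `β`, while
the trivial one is `∑ E = (s + 1)(t + 1)`. Fourier inversion at a point `g₀` not collinear with `1`
(one exists because `α < s`) gives `(s + 1)(t + 1) = -β S`, where `S` is a sum of character values:
an algebraic integer that is rational, hence an integer.
-/

open Finset

section Fourier

variable {A : Type*} [AddCommGroup A] [Fintype A]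

lemma AddChar.isIntegral_apply (ψ : AddChar A ℂ) (a : A) : IsIntegral ℤ (ψ a) := by
  refine IsIntegral.of_pow (Fintype.card_pos (α := A)) ?_
  rw [← ψ.map_nsmul_eq_pow, card_nsmul_eq_zero, ψ.map_zero_eq_one]
  exact isIntegral_one

lemma Int.dvd_of_intCast_eq_mul_of_isIntegral {n b : ℤ} {x : ℂ} (hx : IsIntegral ℤ x)
    (h : (n : ℂ) = b * x) : b ∣ n := by
  rcases eq_or_ne b 0 with rfl | hb
  · simpa using h
  have hxq : x = algebraMap ℚ ℂ (n / b) := by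
    rw [eq_ratCast, Rat.cast_div, Rat.cast_intCast, Rat.cast_intCast, h]
    field_simp
  rw [hxq, isIntegral_algebraMap_iff (algebraMap ℚ ℂ).injective] at hx
  obtain ⟨z, hz⟩ := IsIntegrallyClosed.isIntegral_iff.mp hx
  refine ⟨z, ?_⟩
  have : (n : ℚ) = b * z := by
    rw [eq_intCast] at hz
    rw [hz]
    field_simp
  exact_mod_cast this

lemma sum_mul_apply_sq {E : A → ℂ} {β μ : ℂ}
    (hE : ∀ k, ∑ a, E a * E (k - a) = β * E k + μ) (ψ : AddChar A ℂ) :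
    (∑ a, E a * ψ a) ^ 2 = β * ∑ a, E a * ψ a + μ * ∑ a, ψ a := by
  calc (∑ a, E a * ψ a) ^ 2 = ∑ a, ∑ k, E a * ψ a * (E (k - a) * ψ (k - a)) := by
        rw [sq, sum_mul_sum]
        refine sum_congr rfl fun a _ => ?_
        exact (Fintype.sum_equiv (Equiv.subRight a) _ _ fun k => by simp).symm
    _ = ∑ k, (∑ a, E a * E (k - a)) * ψ k := by
        rw [sum_comm]
        refine sum_congr rfl fun k _ => ?_
        rw [sum_mul]
        refine sum_congr rfl fun a _ => ?_
        rw [mul_mul_mul_comm, ← AddChar.map_add_eq_mul, add_sub_cancel]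
    _ = β * ∑ a, E a * ψ a + μ * ∑ a, ψ a := by
        simp only [hE, mul_sum, ← sum_add_distrib]
        exact sum_congr rfl fun k _ => by ring

variable [DecidableEq A]

lemma sum_sum_mul_apply_mul_apply_neg (E : A → ℂ) (a₀ : A) :
    ∑ ψ : AddChar A ℂ, (∑ a, E a * ψ a) * ψ (-a₀) = Fintype.card A * E a₀ := by
  calc ∑ ψ : AddChar A ℂ, (∑ a, E a * ψ a) * ψ (-a₀)
      = ∑ a, E a * ∑ ψ : AddChar A ℂ, ψ (a - a₀) := by
        simp only [sum_mul, mul_sum, sub_eq_add_neg, AddChar.map_add_eq_mul, mul_assoc]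
        exact sum_comm
    _ = Fintype.card A * E a₀ := by
        simp [AddChar.sum_apply_eq_ite, sub_eq_zero, mul_comm]

theorem dvd_sum_of_sum_mul_sub_eq {E : A → ℤ} {β μ : ℤ}
    (hE : ∀ k, ∑ a, E a * E (k - a) = β * E k + μ) {a₀ : A} (ha₀ : E a₀ = 0) :
    β ∣ ∑ a, E a := by
  set F : AddChar A ℂ → ℂ := fun ψ => ∑ a, (E a : ℂ) * ψ a
  have hF : ∀ ψ ≠ 0, F ψ = 0 ∨ F ψ = β := by
    intro ψ hψ
    have hsq := sum_mul_apply_sq (E := fun a => (E a : ℂ)) (β := β) (μ := μ)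
      (fun k => by exact_mod_cast hE k) ψ
    rw [AddChar.sum_eq_zero_iff_ne_zero.mpr hψ, mul_zero, add_zero] at hsq
    have : F ψ * (F ψ - β) = 0 := by linear_combination hsq
    rcases mul_eq_zero.mp this with h | h
    · exact .inl h
    · exact .inr (by linear_combination h)
  set S := ∑ ψ ∈ univ.erase 0, if F ψ = β then ψ (-a₀) else 0
  have hS : IsIntegral ℤ S := IsIntegral.sum _ fun ψ _ => by
    split_ifs
    exacts [ψ.isIntegral_apply _, isIntegral_zero]
  have hnontriv : ∑ ψ ∈ univ.erase 0, F ψ * ψ (-a₀) = β * S := by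
    rw [mul_sum]
    refine sum_congr rfl fun ψ hψ => ?_
    by_cases hβ : F ψ = β
    · simp [hβ]
    · rw [if_neg hβ, (hF ψ (ne_of_mem_erase hψ)).resolve_right hβ, zero_mul, mul_zero]
  have hinv := sum_sum_mul_apply_mul_apply_neg (fun a => (E a : ℂ)) a₀
  rw [← add_sum_erase _ _ (mem_univ 0), hnontriv] at hinv
  refine Int.dvd_of_intCast_eq_mul_of_isIntegral hS.neg ?_
  simp only [AddChar.zero_apply, mul_one, ha₀, Int.cast_zero, mul_zero] at hinv
  push_cast
  linear_combination hinv

end Fourier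

structure IsPartialGeometry (P : Type*) (𝓛 : Set (Finset P)) (s t α : ℕ) : Prop where
  line_card : ∀ L ∈ 𝓛, L.card = s + 1
  point_deg : ∀ x : P, {L | L ∈ 𝓛 ∧ x ∈ L}.ncard = t + 1
  line_inter : ∀ L ∈ 𝓛, ∀ M ∈ 𝓛, L ≠ M → ((L : Set P) ∩ (M : Set P)).ncard ≤ 1
  alpha_ax : ∀ x : P, ∀ L ∈ 𝓛, x ∉ L →
    {M | M ∈ 𝓛 ∧ x ∈ M ∧ ∃ y ∈ L, y ∈ M}.ncard = α

theorem IsPGSinger.isPartialGeometry {G : Type*} [CommGroup G] [DecidableEq G]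
    {𝓛 : Set (Finset G)} {s t α : ℕ} (hpg : IsPGSinger G 𝓛 s t α) :
    IsPartialGeometry G 𝓛 s t α :=
  ⟨hpg.line_card, hpg.point_deg, hpg.line_inter, hpg.alpha_ax⟩

namespace PartialGeometry

variable {P : Type*} [Fintype P]

noncomputable def pencil (𝓛 : Set (Finset P)) (x : P) : Finset (Finset P) :=
  (Set.toFinite {L | L ∈ 𝓛 ∧ x ∈ L}).toFinset

@[simp]
lemma mem_pencil {𝓛 : Set (Finset P)} {x : P} {L : Finset P} :
    L ∈ pencil 𝓛 x ↔ L ∈ 𝓛 ∧ x ∈ L := by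
  simp [pencil]

variable [DecidableEq P]

noncomputable def jointLines (𝓛 : Set (Finset P)) (x y : P) : ℕ := #{L ∈ pencil 𝓛 x | y ∈ L}

variable {𝓛 : Set (Finset P)}

lemma jointLines_comm (x y : P) : jointLines 𝓛 x y = jointLines 𝓛 y x := by
  unfold jointLines
  congr 1
  ext L
  simp only [mem_filter, mem_pencil]
  tauto

lemma jointLines_eq_sum (x y : P) :
    jointLines 𝓛 x y = ∑ L ∈ pencil 𝓛 x, if y ∈ L then 1 else 0 :=
  card_filter _ _

lemma sum_jointLines_eq_sum_card (x : P) : ∑ y, jointLines 𝓛 x y = ∑ L ∈ pencil 𝓛 x, #L := by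
  simp only [jointLines_eq_sum]
  rw [sum_comm]
  refine sum_congr rfl fun L _ => ?_
  simp

lemma sum_jointLines_mul_jointLines_eq_sum_card_inter (x z : P) :
    ∑ y, jointLines 𝓛 x y * jointLines 𝓛 y z =
      ∑ L ∈ pencil 𝓛 x, ∑ M ∈ pencil 𝓛 z, #(L ∩ M) := by
  simp only [jointLines_comm _ z, jointLines_eq_sum, sum_mul_sum]
  rw [sum_comm]
  refine sum_congr rfl fun L _ => ?_
  rw [sum_comm]
  refine sum_congr rfl fun M _ => ?_
  simp [sum_ite_mem, inter_comm]

end PartialGeometry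

namespace IsPartialGeometry

open PartialGeometry

variable {P : Type*} {𝓛 : Set (Finset P)} {s t α : ℕ}

lemma card_inter_le_one [DecidableEq P] (hpg : IsPartialGeometry P 𝓛 s t α) {L M : Finset P}
    (hL : L ∈ 𝓛) (hM : M ∈ 𝓛) (hLM : L ≠ M) : #(L ∩ M) ≤ 1 := by
  simpa [← coe_inter, Set.ncard_coe_finset] using hpg.line_inter L hL M hM hLM

variable [Fintype P]

lemma card_pencil (hpg : IsPartialGeometry P 𝓛 s t α) (x : P) : #(pencil 𝓛 x) = t + 1 := by
  rw [← hpg.point_deg x, Set.ncard_eq_toFinset_card _ (Set.toFinite _)]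
  rfl

variable [DecidableEq P]

lemma sum_card_inter_of_mem (hpg : IsPartialGeometry P 𝓛 s t α) {L : Finset P} (hL : L ∈ 𝓛)
    {z : P} (hz : z ∈ L) : ∑ M ∈ pencil 𝓛 z, #(L ∩ M) = s + t + 1 := by
  have hLz : L ∈ pencil 𝓛 z := mem_pencil.mpr ⟨hL, hz⟩
  have hmeet : ∀ M ∈ (pencil 𝓛 z).erase L, #(L ∩ M) = 1 := by
    intro M hM
    obtain ⟨hML, hM, hzM⟩ := by simpa using hM
    refine le_antisymm (hpg.card_inter_le_one hL hM (Ne.symm hML)) ?_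
    exact card_pos.mpr ⟨z, mem_inter.mpr ⟨hz, hzM⟩⟩
  rw [← add_sum_erase _ _ hLz, sum_congr rfl hmeet, inter_self, hpg.line_card L hL,
    sum_const, card_erase_of_mem hLz, hpg.card_pencil, smul_eq_mul, mul_one]
  omega

lemma sum_card_inter_of_notMem (hpg : IsPartialGeometry P 𝓛 s t α) {L : Finset P} (hL : L ∈ 𝓛)
    {z : P} (hz : z ∉ L) : ∑ M ∈ pencil 𝓛 z, #(L ∩ M) = α := by
  have hmeet : ∀ M ∈ pencil 𝓛 z, #(L ∩ M) = if (L ∩ M).Nonempty then 1 else 0 := by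
    intro M hM
    obtain ⟨hM, hzM⟩ := mem_pencil.mp hM
    have hle := hpg.card_inter_le_one hL hM (by rintro rfl; exact hz hzM)
    split_ifs with h
    · exact le_antisymm hle (card_pos.mpr h)
    · simpa [not_nonempty_iff_eq_empty] using h
  rw [sum_congr rfl hmeet, sum_boole, Nat.cast_id, ← hpg.alpha_ax z L hL hz,
    ← Set.ncard_coe_finset]
  congr 1
  ext M
  simp [Finset.Nonempty, and_assoc]

lemma sum_jointLines (hpg : IsPartialGeometry P 𝓛 s t α) (x : P) :
    ∑ y, jointLines 𝓛 x y = (s + 1) * (t + 1) := by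
  rw [sum_jointLines_eq_sum_card, sum_congr rfl fun L hL => hpg.line_card L (mem_pencil.mp hL).1,
    sum_const, hpg.card_pencil, smul_eq_mul, mul_comm]

lemma sum_jointLines_mul_jointLines (hpg : IsPartialGeometry P 𝓛 s t α) (x z : P) :
    ∑ y, (jointLines 𝓛 x y * jointLines 𝓛 y z : ℤ) =
      (s + t + 1 - α) * jointLines 𝓛 x z + α * (t + 1) := by
  have hsum : ∀ L ∈ pencil 𝓛 x, ∑ M ∈ pencil 𝓛 z, (#(L ∩ M) : ℤ) =
      (s + t + 1 - α) * (if z ∈ L then 1 else 0) + α := by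
    intro L hL
    have hL𝓛 := (mem_pencil.mp hL).1
    split_ifs with hz
    · rw [← Nat.cast_sum, hpg.sum_card_inter_of_mem hL𝓛 hz]
      push_cast
      ring
    · rw [← Nat.cast_sum, hpg.sum_card_inter_of_notMem hL𝓛 hz]
      ring
  calc ∑ y, (jointLines 𝓛 x y * jointLines 𝓛 y z : ℤ)
      = ∑ L ∈ pencil 𝓛 x, ∑ M ∈ pencil 𝓛 z, (#(L ∩ M) : ℤ) := by
        exact_mod_cast sum_jointLines_mul_jointLines_eq_sum_card_inter x z
    _ = ∑ L ∈ pencil 𝓛 x, (((s : ℤ) + t + 1 - α) * (if z ∈ L then 1 else 0) + α) :=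
        sum_congr rfl hsum
    _ = (s + t + 1 - α) * jointLines 𝓛 x z + α * (t + 1) := by
        rw [sum_add_distrib, ← mul_sum, sum_const, hpg.card_pencil, jointLines_eq_sum]
        push_cast
        ring

lemma exists_jointLines_eq_zero (hpg : IsPartialGeometry P 𝓛 s t α) (hαs : α < s) (ht : 0 < t)
    (x : P) : ∃ y, jointLines 𝓛 x y = 0 := by
  by_contra! hpos
  have hK : ∀ y, ∑ z, (jointLines 𝓛 y z : ℤ) = (s + 1) * (t + 1) := fun y => by
    exact_mod_cast hpg.sum_jointLines y
  have hcard : (Fintype.card P : ℤ) ≤ (s + 1) * (t + 1) := by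
    rw [← hK x, Fintype.card_eq_sum_ones, Nat.cast_sum]
    exact sum_le_sum fun y _ => by exact_mod_cast Nat.one_le_iff_ne_zero.mpr (hpos y)
  have hdouble : ∑ z, ∑ y, (jointLines 𝓛 x y * jointLines 𝓛 y z : ℤ) =
      (s + 1) * (t + 1) * ((s + 1) * (t + 1)) := by
    simp only [sum_comm (γ := P), ← mul_sum, hK, ← sum_mul]
  simp only [hpg.sum_jointLines_mul_jointLines, sum_add_distrib, ← mul_sum, hK, sum_const,
    card_univ, nsmul_eq_mul] at hdouble
  -- the usual point count `α |P| = (s + 1)(s t + α)`, rearranged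
  have key : ((s + 1) * (t + 1) : ℤ) * (t * (s - α)) =
      α * (t + 1) * (Fintype.card P - (s + 1) * (t + 1)) := by
    linear_combination -hdouble
  have hlhs : 0 < ((s + 1) * (t + 1) : ℤ) * (t * (s - α)) := by
    have : (α : ℤ) < s := by exact_mod_cast hαs
    positivity
  have hrhs : α * (t + 1) * (Fintype.card P - (s + 1) * (t + 1) : ℤ) ≤ 0 :=
    mul_nonpos_of_nonneg_of_nonpos (by positivity) (by linarith)
  linarith

end IsPartialGeometry

namespace IsPGSinger

open PartialGeometry

variable {G : Type*} [CommGroup G] [Fintype G] [DecidableEq G] {𝓛 : Set (Finset G)} {s t α : ℕ}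

lemma jointLines_le_jointLines_mul_mul (hpg : IsPGSinger G 𝓛 s t α) (g x y : G) :
    jointLines 𝓛 x y ≤ jointLines 𝓛 (g * x) (g * y) := by
  refine card_le_card_of_injOn (fun L => L.image (g * ·)) ?_
    (image_injective (mul_right_injective g)).injOn
  intro L hL
  simp only [coe_filter, mem_pencil, Set.mem_ofPred_eq] at hL ⊢
  exact ⟨⟨hpg.translate g L hL.1.1, mem_image_of_mem _ hL.1.2⟩, mem_image_of_mem _ hL.2⟩

lemma jointLines_mul_mul (hpg : IsPGSinger G 𝓛 s t α) (g x y : G) :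
    jointLines 𝓛 (g * x) (g * y) = jointLines 𝓛 x y :=
  le_antisymm (by simpa using hpg.jointLines_le_jointLines_mul_mul g⁻¹ (g * x) (g * y))
    (hpg.jointLines_le_jointLines_mul_mul g x y)

lemma jointLines_one_div (hpg : IsPGSinger G 𝓛 s t α) (g k : G) :
    jointLines 𝓛 1 (k / g) = jointLines 𝓛 g k := by
  simpa using (hpg.jointLines_mul_mul g 1 (k / g)).symm

end IsPGSinger

theorem rigid_type_dvd_lines_general
    (G : Type*) [CommGroup G] [Fintype G] [DecidableEq G]
    (s t α : ℕ) (hαs : α < s) (hαt : α < t)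
    (𝓛 : Set (Finset G)) (hpg : IsPGSinger G 𝓛 s t α) :
    (s + t - α + 1) ∣ (s + 1) * (t + 1) := by
  set E : Additive G → ℤ := fun a => PartialGeometry.jointLines 𝓛 1 a.toMul
  have hconv : ∀ k, ∑ a, E a * E (k - a) = (s + t + 1 - α) * E k + α * (t + 1) := fun k => by
    rw [← hpg.isPartialGeometry.sum_jointLines_mul_jointLines]
    exact Fintype.sum_equiv Additive.toMul _ _ fun a => by simp [E, hpg.jointLines_one_div]
  obtain ⟨g₀, hg₀⟩ := hpg.isPartialGeometry.exists_jointLines_eq_zero hαs (by omega) 1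
  have hdvd := dvd_sum_of_sum_mul_sub_eq hconv (a₀ := Additive.ofMul g₀) (by simpa [E] using hg₀)
  have hsum : ∑ a, E a = (s + 1) * (t + 1) := by
    rw [Fintype.sum_equiv Additive.toMul _ (fun g => (PartialGeometry.jointLines 𝓛 1 g : ℤ))
      fun _ => rfl]
    exact_mod_cast hpg.isPartialGeometry.sum_jointLines 1
  have hβ : ((s + t - α + 1 : ℕ) : ℤ) = s + t + 1 - α := by omega
  rw [hsum, ← hβ] at hdvd
  exact_mod_cast hdvd

/-- for a proper `pg(s,t,α)` of rigid type with abelian Singer group `G`,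
`s+t-α+1` divides `(s+1)(t+1)`. -/
theorem rigid_type_dvd_lines
    (G : Type*) [CommGroup G] [Fintype G] [DecidableEq G]
    (s t α : ℕ) (hα2 : 2 ≤ α) (hαs : α < s) (hαt : α < t)
    (𝓛 : Set (Finset G)) (hpg : IsPGSinger G 𝓛 s t α) (hrig : RigidType G 𝓛) :
    (s + t - α + 1) ∣ (s + 1) * (t + 1) :=
  rigid_type_dvd_lines_general G s t α hαs hαt 𝓛 hpg
end

section
/- Let s, t, α be positive integers with 2 ≤ α, α < s and α < t, and let G be a finite abelian group with line set 𝓛 making (G,𝓛) a proper partial geometry pg(s,t,α) admitting G as an abelian Singer group, such that the pair is of rigid type (axioms (i)–(vi) of the encoding). Then the number of points v = |G| satisfies v·α = (s+1)(st+α) and (s + t − α + 1) divides v. -/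
open Finset SimpleGraph

lemma Int.dvd_of_mul_eq_of_isIntegral {n c : ℤ} {z : ℂ} (hz : IsIntegral ℤ z)
    (h : n * z = c) : n ∣ c := by
  rcases eq_or_ne n 0 with rfl | hn
  · simp_all [eq_comm]
  have hzq : z = ((c / n : ℚ) : ℂ) := by
    push_cast
    rw [eq_div_iff (by exact_mod_cast hn), mul_comm, h]
  rw [hzq, ← eq_ratCast (algebraMap ℚ ℂ), isIntegral_algebraMap_iff (algebraMap ℚ ℂ).injective,
    IsIntegrallyClosed.isIntegral_iff] at hz
  obtain ⟨m, hm⟩ := hz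
  refine ⟨m, ?_⟩
  have : (m : ℚ) = c / n := hm
  rw [eq_div_iff (by exact_mod_cast hn)] at this
  exact_mod_cast (this.symm.trans (mul_comm _ _))

section Characters

variable {G : Type*} [CommGroup G] [Fintype G]

lemma sum_units_coe_apply_eq_zero {χ : G →* ℂˣ} (hχ : χ ≠ 1) : ∑ g, (χ g : ℂ) = 0 :=
  sum_hom_units_eq_zero ((Units.coeHom ℂ).comp χ) fun h ↦
    hχ <| MonoidHom.ext fun g ↦ Units.ext <| DFunLike.congr_fun h g

lemma sum_units_coe_apply_eq_ite [DecidableEq G] [Fintype (G →* ℂˣ)] (g : G) :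
    ∑ χ : G →* ℂˣ, (χ g : ℂ) = if g = 1 then (Fintype.card G : ℂ) else 0 := by
  classical
  let ev : (G →* ℂˣ) →* ℂ := (Units.coeHom ℂ).comp (MonoidHom.eval g)
  have hev : ev = 1 ↔ g = 1 := by
    refine ⟨fun h ↦ ?_, fun h ↦ by ext χ; simp [ev, h]⟩
    by_contra hg
    obtain ⟨χ, hχ⟩ := CommGroup.exists_apply_ne_one_of_hasEnoughRootsOfUnity G ℂ hg
    exact hχ <| Units.ext <| DFunLike.congr_fun h χ
  have hcard : Fintype.card (G →* ℂˣ) = Fintype.card G := by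
    simpa only [Nat.card_eq_fintype_card] using
      CommGroup.card_monoidHom_of_hasEnoughRootsOfUnity G ℂ
  have := sum_hom_units ev
  simp only [hev, hcard] at this
  simpa [ev, apply_ite (Nat.cast : ℕ → ℂ)] using this

lemma isIntegral_units_coe_apply (χ : G →* ℂˣ) (g : G) : IsIntegral ℤ (χ g : ℂ) := by
  refine IsIntegral.of_pow (Fintype.card_pos (α := G)) ?_
  rw [← Units.val_pow_eq_pow_val, ← map_pow, pow_card_eq_one, map_one, Units.val_one]
  exact isIntegral_one

end Characters

section PartialDifferenceSet

variable {G : Type*} [CommGroup G]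

def charSum (D : Finset G) (χ : G →* ℂˣ) : ℂ := ∑ a ∈ D, (χ a : ℂ)

lemma charSum_one (D : Finset G) : charSum D 1 = #D := by
  simp [charSum]

variable [DecidableEq G]

def mulRepCount (D : Finset G) (g : G) : ℕ := #{a ∈ D | a⁻¹ * g ∈ D}

structure IsPartialDifferenceSet (D : Finset G) (ℓ μ : ℕ) : Prop where
  one_notMem : 1 ∉ D
  inv_mem : ∀ a ∈ D, a⁻¹ ∈ D
  mulRepCount_of_mem : ∀ g ∈ D, mulRepCount D g = ℓ
  mulRepCount_of_notMem : ∀ g ∉ D, g ≠ 1 → mulRepCount D g = μ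

lemma IsPartialDifferenceSet.mulRepCount_eq {D : Finset G} {ℓ μ : ℕ}
    (h : IsPartialDifferenceSet D ℓ μ) (g : G) :
    (mulRepCount D g : ℂ) =
      (if g = 1 then (#D - μ : ℂ) else 0) + (if g ∈ D then (ℓ - μ : ℂ) else 0) + μ := by
  by_cases hg1 : g = 1
  · subst hg1
    have : {a ∈ D | a⁻¹ ∈ D} = D := filter_true_of_mem h.inv_mem
    simp [mulRepCount, this, h.one_notMem]
  by_cases hg : g ∈ D
  · simp [h.mulRepCount_of_mem g hg, hg, hg1]
  · simp [h.mulRepCount_of_notMem g hg hg1, hg, hg1]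

variable [Fintype G]

lemma charSum_sq (D : Finset G) (χ : G →* ℂˣ) :
    charSum D χ ^ 2 = ∑ g, (mulRepCount D g : ℂ) * χ g := by
  calc charSum D χ ^ 2 = ∑ a ∈ D, ∑ b ∈ D, (χ (a * b) : ℂ) := by
        simp [charSum, sq, sum_mul_sum]
    _ = ∑ a ∈ D, ∑ g with a⁻¹ * g ∈ D, (χ g : ℂ) := by
        refine sum_congr rfl fun a _ ↦ sum_nbij' (a * ·) (a⁻¹ * ·) ?_ ?_ ?_ ?_ ?_ <;> simp
    _ = ∑ g, (mulRepCount D g : ℂ) * χ g := by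
        simp_rw [sum_filter]
        rw [sum_comm]
        simp [mulRepCount, ← sum_filter]

namespace IsPartialDifferenceSet

variable {D : Finset G} {ℓ μ : ℕ} (h : IsPartialDifferenceSet D ℓ μ)
include h

lemma charSum_sq_eq (χ : G →* ℂˣ) :
    charSum D χ ^ 2 = (#D - μ) + (ℓ - μ) * charSum D χ + μ * ∑ g, (χ g : ℂ) := by
  simp_rw [charSum_sq, h.mulRepCount_eq, add_mul, sum_add_distrib, ite_mul, zero_mul,
    sum_ite_eq', ← sum_filter, ← mul_sum]
  simp [charSum]

lemma charSum_eq_or_eq {r q : ℤ} (hsum : r + q = (ℓ : ℤ) - μ) (hprod : r * q = (μ : ℤ) - #D)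
    {χ : G →* ℂˣ} (hχ : χ ≠ 1) : charSum D χ = r ∨ charSum D χ = q := by
  have hsum' : (r + q : ℂ) = ℓ - μ := by exact_mod_cast hsum
  have hprod' : (r * q : ℂ) = μ - #D := by exact_mod_cast hprod
  have hquad := h.charSum_sq_eq χ
  rw [sum_units_coe_apply_eq_zero hχ] at hquad
  have : (charSum D χ - r) * (charSum D χ - q) = 0 := by
    linear_combination hquad - charSum D χ * hsum' + hprod'
  simpa [sub_eq_zero] using this

end IsPartialDifferenceSet

lemma sum_charSum_mul_apply [Fintype (G →* ℂˣ)] (D : Finset G) (x : G) :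
    ∑ χ : G →* ℂˣ, charSum D χ * χ x = if x⁻¹ ∈ D then (Fintype.card G : ℂ) else 0 := by
  simp_rw [charSum, sum_mul, ← Units.val_mul, ← map_mul]
  rw [sum_comm]
  simp_rw [sum_units_coe_apply_eq_ite, mul_eq_one_iff_eq_inv, sum_ite_eq']

lemma sub_dvd_of_charSum_eq_or_eq {D : Finset G} {r q : ℤ}
    (hD : ∀ χ : G →* ℂˣ, χ ≠ 1 → charSum D χ = r ∨ charSum D χ = q) {x : G} (hx : x ≠ 1) :
    r - q ∣ (if x⁻¹ ∈ D then (Fintype.card G : ℤ) else 0) - #D + q := by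
  classical
  let := Fintype.ofFinite (G →* ℂˣ)
  let S : ℂ := ∑ χ ∈ {1}ᶜ, if charSum D χ = r then (χ x : ℂ) else 0
  have hterm : ∀ χ ∈ ({1}ᶜ : Finset (G →* ℂˣ)),
      charSum D χ * χ x = (r - q) * (if charSum D χ = r then (χ x : ℂ) else 0) + q * χ x := by
    intro χ hχ
    rcases hD χ (by simpa using hχ) with h | h
    · rw [h, if_pos rfl]
      ring
    · by_cases hrq : (r : ℂ) = q
      · simp [h, hrq]
      · simp [h, Ne.symm hrq]
  have hrest : ∑ χ ∈ ({1}ᶜ : Finset (G →* ℂˣ)), (χ x : ℂ) = -1 := by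
    have := sum_units_coe_apply_eq_ite (G := G) x
    rw [Fintype.sum_eq_add_sum_compl 1, if_neg hx] at this
    simp only [MonoidHom.one_apply, Units.val_one] at this
    linear_combination this
  have hS : (r - q : ℂ) * S = (if x⁻¹ ∈ D then (Fintype.card G : ℂ) else 0) - #D + q := by
    have := sum_charSum_mul_apply D x
    rw [Fintype.sum_eq_add_sum_compl 1, sum_congr rfl hterm, sum_add_distrib, ← mul_sum,
      ← mul_sum, hrest, charSum_one] at this
    simp only [MonoidHom.one_apply, Units.val_one, mul_one] at this
    linear_combination this
  refine Int.dvd_of_mul_eq_of_isIntegral (z := S) ?_ (by push_cast [hS, apply_ite]; rfl)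
  exact IsIntegral.sum _ fun χ _ ↦ by
    split_ifs
    exacts [isIntegral_units_coe_apply χ x, isIntegral_zero]

lemma sub_dvd_card_of_charSum_eq_or_eq {D : Finset G} {r q : ℤ}
    (hD : ∀ χ : G →* ℂˣ, χ ≠ 1 → charSum D χ = r ∨ charSum D χ = q) {a b : G}
    (ha : a ∈ D) (ha1 : a ≠ 1) (hb : b ∉ D) (hb1 : b ≠ 1) :
    r - q ∣ Fintype.card G := by
  have hdvd := dvd_sub (sub_dvd_of_charSum_eq_or_eq hD (inv_ne_one.2 ha1))
    (sub_dvd_of_charSum_eq_or_eq hD (inv_ne_one.2 hb1))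
  simp only [inv_inv, ha, hb, if_true, if_false] at hdvd
  rwa [show (Fintype.card G : ℤ) - #D + q - (0 - #D + q) = Fintype.card G by ring] at hdvd

end PartialDifferenceSet

section CayleyGraph

variable {G : Type*} [CommGroup G] [Fintype G] [DecidableEq G] {Γ : SimpleGraph G}
  [DecidableRel Γ.Adj]

lemma mulRepCount_neighborFinset_one (hΓ : ∀ g x y, Γ.Adj (g * x) (g * y) ↔ Γ.Adj x y)
    (g : G) : mulRepCount (Γ.neighborFinset 1) g = Fintype.card (Γ.commonNeighbors 1 g) := by
  rw [← Set.toFinset_card, mulRepCount]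
  congr 1
  ext a
  simp only [mem_filter, mem_neighborFinset, Set.mem_toFinset, mem_commonNeighbors]
  rw [← hΓ a 1 (a⁻¹ * g), mul_one, mul_inv_cancel_left, Γ.adj_comm g]

lemma SimpleGraph.IsSRGWith.isPartialDifferenceSet_neighborFinset_one {n k ℓ μ : ℕ}
    (h : Γ.IsSRGWith n k ℓ μ) (hΓ : ∀ g x y, Γ.Adj (g * x) (g * y) ↔ Γ.Adj x y) :
    IsPartialDifferenceSet (Γ.neighborFinset 1) ℓ μ where
  one_notMem := Γ.notMem_neighborFinset_self 1
  inv_mem a ha := by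
    rw [mem_neighborFinset] at ha ⊢
    simpa using ((hΓ a⁻¹ 1 a).2 ha).symm
  mulRepCount_of_mem g hg := by
    rw [mulRepCount_neighborFinset_one hΓ]
    exact h.of_adj 1 g ((mem_neighborFinset _ _ _).1 hg)
  mulRepCount_of_notMem g hg hg1 := by
    rw [mulRepCount_neighborFinset_one hΓ]
    exact h.of_not_adj (Ne.symm hg1) fun h ↦ hg ((mem_neighborFinset _ _ _).2 h)

end CayleyGraph

section CollinearityGraph

variable {G : Type*}

def collinearityGraph (𝓛 : Set (Finset G)) : SimpleGraph G where
  Adj x y := x ≠ y ∧ ∃ L ∈ 𝓛, x ∈ L ∧ y ∈ L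
  symm := ⟨fun _ _ ⟨hne, L, hL, hx, hy⟩ ↦ ⟨hne.symm, L, hL, hy, hx⟩⟩
  loopless := ⟨fun _ h ↦ h.1 rfl⟩

noncomputable instance (𝓛 : Set (Finset G)) : DecidableRel (collinearityGraph 𝓛).Adj :=
  Classical.decRel _

open Classical in
noncomputable def linesThrough [Fintype G] (𝓛 : Set (Finset G)) (x : G) :
    Finset (Finset G) :=
  {L | L ∈ 𝓛 ∧ x ∈ L}

@[simp]
lemma mem_linesThrough [Fintype G] {𝓛 : Set (Finset G)} {x : G} {L : Finset G} :
    L ∈ linesThrough 𝓛 x ↔ L ∈ 𝓛 ∧ x ∈ L := by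
  simp [linesThrough]

end CollinearityGraph

namespace IsPGSinger

variable {G : Type*} [CommGroup G] [DecidableEq G] {𝓛 : Set (Finset G)} {s t α : ℕ}
  (hpg : IsPGSinger G 𝓛 s t α)
include hpg

lemma eq_of_mem_of_mem {L M : Finset G} (hL : L ∈ 𝓛) (hM : M ∈ 𝓛) {x y : G} (hxy : x ≠ y)
    (hxL : x ∈ L) (hyL : y ∈ L) (hxM : x ∈ M) (hyM : y ∈ M) : L = M := by
  by_contra hne
  have hpair : ({x, y} : Set G).ncard ≤ ((L : Set G) ∩ M).ncard :=
    Set.ncard_le_ncard (by simp [Set.insert_subset_iff, *]) (Set.toFinite _)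
  have := hpg.line_inter L hL M hM hne
  rw [Set.ncard_pair hxy] at hpair
  omega

lemma collinearityGraph_adj_mul {x y : G} (g : G) (h : (collinearityGraph 𝓛).Adj x y) :
    (collinearityGraph 𝓛).Adj (g * x) (g * y) := by
  obtain ⟨hne, L, hL, hx, hy⟩ := h
  exact ⟨by simpa using hne, _, hpg.translate g L hL, mem_image_of_mem _ hx,
    mem_image_of_mem _ hy⟩

lemma collinearityGraph_adj_mul_iff (g x y : G) :
    (collinearityGraph 𝓛).Adj (g * x) (g * y) ↔ (collinearityGraph 𝓛).Adj x y :=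
  ⟨fun h ↦ by simpa using hpg.collinearityGraph_adj_mul g⁻¹ h, hpg.collinearityGraph_adj_mul g⟩

/-- A line through `x` that meets `L` meets it in a single point, so the lines counted by axiom
(iv) correspond to the points of `L` collinear with `x`. -/
lemma card_filter_adj_of_notMem {L : Finset G} (hL : L ∈ 𝓛) {x : G} (hx : x ∉ L) :
    #{z ∈ L | (collinearityGraph 𝓛).Adj x z} = α := by
  rw [← hpg.alpha_ax x L hL hx, ← Set.ncard_coe_finset]
  symm
  refine Set.ncard_congr (fun M hM ↦ hM.2.2.choose) (fun M ⟨hM, hxM, hLM⟩ ↦ ?_)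
    (fun M M' ⟨hM, hxM, hLM⟩ ⟨hM', hxM', hLM'⟩ h ↦ ?_) fun z hz ↦ ?_
  · obtain ⟨hyL, hyM⟩ := hLM.choose_spec
    exact mem_filter.2 ⟨hyL, (ne_of_mem_of_not_mem hyL hx).symm, M, hM, hxM, hyM⟩
  · obtain ⟨hyL, hyM⟩ := hLM.choose_spec
    obtain ⟨-, hyM'⟩ := hLM'.choose_spec
    exact hpg.eq_of_mem_of_mem hM hM' (ne_of_mem_of_not_mem hyL hx).symm hxM hyM hxM' (h ▸ hyM')
  · obtain ⟨hzL, -, M, hM, hxM, hzM⟩ := mem_filter.1 hz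
    have hLM : ∃ y ∈ L, y ∈ M := ⟨z, hzL, hzM⟩
    refine ⟨M, ⟨hM, hxM, hLM⟩, ?_⟩
    obtain ⟨hyL, hyM⟩ := hLM.choose_spec
    by_contra hyz
    exact hx (hpg.eq_of_mem_of_mem hL hM hyz hyL hzL hyM hzM ▸ hxM)

variable [Fintype G]

lemma card_linesThrough (x : G) : #(linesThrough 𝓛 x) = t + 1 := by
  rw [← hpg.point_deg x, ← Set.ncard_coe_finset]
  congr
  ext
  simp

lemma card_eq_sum_card_inter_linesThrough {y : G} {T : Finset G}
    (hT : ∀ z ∈ T, (collinearityGraph 𝓛).Adj y z) :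
    #T = ∑ M ∈ linesThrough 𝓛 y, #(T ∩ M) := by
  rw [← card_biUnion]
  · congr
    ext z
    simp only [mem_biUnion, mem_inter, mem_linesThrough]
    refine ⟨fun hz ↦ ?_, fun ⟨_, _, hz, _⟩ ↦ hz⟩
    obtain ⟨-, M, hM, hyM, hzM⟩ := hT z hz
    exact ⟨M, ⟨hM, hyM⟩, hz, hzM⟩
  · intro M hM M' hM' hne
    simp only [mem_coe, mem_linesThrough] at hM hM'
    refine disjoint_left.2 fun z hz hz' ↦ hne ?_
    rw [mem_inter] at hz hz'
    exact hpg.eq_of_mem_of_mem hM.1 hM'.1 (hT z hz.1).1 hM.2 hz.2 hM'.2 hz'.2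

lemma card_commonNeighbors_collinearityGraph (x y : G) :
    Fintype.card ((collinearityGraph 𝓛).commonNeighbors x y) =
      ∑ M ∈ linesThrough 𝓛 y, #({z ∈ M | (collinearityGraph 𝓛).Adj x z}.erase y) := by
  rw [← Set.toFinset_card, hpg.card_eq_sum_card_inter_linesThrough fun z hz ↦
    ((mem_commonNeighbors _).1 (Set.mem_toFinset.1 hz)).2]
  refine sum_congr rfl fun M hM ↦ congrArg card ?_
  ext z
  simp only [mem_inter, Set.mem_toFinset, mem_commonNeighbors, mem_erase, mem_filter]
  have hyM := (mem_linesThrough.1 hM)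
  constructor
  · rintro ⟨⟨hxz, hyz⟩, hzM⟩
    exact ⟨hyz.1.symm, hzM, hxz⟩
  · rintro ⟨hzy, hzM, hxz⟩
    exact ⟨⟨hxz, Ne.symm hzy, M, hyM.1, hyM.2, hzM⟩, hzM⟩

lemma isSRGWith_collinearityGraph :
    (collinearityGraph 𝓛).IsSRGWith (Fintype.card G) (s * (t + 1)) (s - 1 + t * (α - 1))
      (α * (t + 1)) where
  card := rfl
  regular y := by
    rw [← card_neighborFinset_eq_degree, hpg.card_eq_sum_card_inter_linesThrough fun z hz ↦
      (mem_neighborFinset _ _ _).1 hz, sum_congr rfl fun M hM ↦ ?_, sum_const,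
      hpg.card_linesThrough, smul_eq_mul, mul_comm]
    obtain ⟨hM, hyM⟩ := mem_linesThrough.1 hM
    have : (collinearityGraph 𝓛).neighborFinset y ∩ M = M.erase y := by
      ext z
      simp only [mem_inter, mem_neighborFinset, mem_erase]
      exact ⟨fun ⟨hyz, hzM⟩ ↦ ⟨hyz.1.symm, hzM⟩,
        fun ⟨hzy, hzM⟩ ↦ ⟨⟨Ne.symm hzy, M, hM, hyM, hzM⟩, hzM⟩⟩
    rw [this, card_erase_of_mem hyM, hpg.line_card M hM, Nat.add_sub_cancel]
  of_adj x y hxy := by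
    obtain ⟨hne, L, hL, hxL, hyL⟩ := hxy
    have hLy : L ∈ linesThrough 𝓛 y := mem_linesThrough.2 ⟨hL, hyL⟩
    rw [hpg.card_commonNeighbors_collinearityGraph, ← sum_erase_add _ _ hLy,
      sum_congr rfl fun M hM ↦ ?_, sum_const, card_erase_of_mem hLy, hpg.card_linesThrough,
      smul_eq_mul, Nat.add_sub_cancel, add_comm]
    · have : {z ∈ L | (collinearityGraph 𝓛).Adj x z} = L.erase x := by
        ext z
        simp only [mem_filter, mem_erase]
        exact ⟨fun ⟨hzL, hxz⟩ ↦ ⟨hxz.1.symm, hzL⟩,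
          fun ⟨hzx, hzL⟩ ↦ ⟨hzL, Ne.symm hzx, L, hL, hxL, hzL⟩⟩
      rw [this, card_erase_of_mem (mem_erase.2 ⟨hne.symm, hyL⟩), card_erase_of_mem hxL,
        hpg.line_card L hL]
      rfl
    · obtain ⟨hML, hM, hyM⟩ := mem_erase.1 hM |>.imp_right mem_linesThrough.1
      have hxM : x ∉ M := fun hxM ↦ hML (hpg.eq_of_mem_of_mem hM hL hne hxM hyM hxL hyL)
      rw [card_erase_of_mem (mem_filter.2 ⟨hyM, hne, L, hL, hxL, hyL⟩),
        hpg.card_filter_adj_of_notMem hM hxM]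
  of_not_adj x y hne hxy := by
    rw [hpg.card_commonNeighbors_collinearityGraph, sum_congr rfl fun M hM ↦ ?_, sum_const,
      hpg.card_linesThrough, smul_eq_mul, mul_comm]
    obtain ⟨hM, hyM⟩ := mem_linesThrough.1 hM
    have hxM : x ∉ M := fun hxM ↦ hxy ⟨hne, M, hM, hxM, hyM⟩
    rw [erase_eq_of_notMem fun hy ↦ hxy (mem_filter.1 hy).2, hpg.card_filter_adj_of_notMem hM hxM]


lemma card_mul_eq (hα : 0 < α) (hαs : α ≤ s) : Fintype.card G * α = (s + 1) * (s * t + α) := by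
  have hsrg := hpg.isSRGWith_collinearityGraph
  have hparam := hsrg.param_eq _ Fintype.card_pos
  obtain ⟨m, hm⟩ := Nat.exists_eq_add_of_lt (hsrg.regular 1 ▸ degree_lt_card_verts 1)
  obtain ⟨a, rfl⟩ : ∃ a, α = a + 1 := ⟨α - 1, by omega⟩
  obtain ⟨d, rfl⟩ : ∃ d, s = a + 1 + d := ⟨s - (a + 1), by omega⟩
  rw [hm] at hparam ⊢
  rw [show (a + 1 + d) * (t + 1) - (a + 1 + d - 1 + t * (a + 1 - 1)) - 1 = t * (d + 1) by
      rw [Nat.add_sub_cancel, show a + 1 + d - 1 = a + d by omega]; ring_nf; omega,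
    show (a + 1 + d) * (t + 1) + m + 1 - (a + 1 + d) * (t + 1) - 1 = m by omega] at hparam
  have : (a + 1 + d) * (t * (d + 1)) = m * (a + 1) := by
    apply Nat.eq_of_mul_eq_mul_left (show 0 < t + 1 by omega)
    linear_combination hparam
  linear_combination this.symm

lemma card_neighborFinset (x : G) :
    #((collinearityGraph 𝓛).neighborFinset x) = s * (t + 1) :=
  (card_neighborFinset_eq_degree _ _).trans (hpg.isSRGWith_collinearityGraph.regular x)

lemma card_neighborFinset_add_one_lt (hα : 0 < α) (hαs : α < s) (ht : 0 < t) :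
    s * (t + 1) + 1 < Fintype.card G := by
  have hv := hpg.card_mul_eq hα hαs.le
  have : s * t * α < s * t * (s + 1) :=
    Nat.mul_lt_mul_of_pos_left (by omega) (Nat.mul_pos (by omega) ht)
  nlinarith

lemma charSum_neighborFinset_one_eq_or_eq (hα : 0 < α) (hs : 0 < s) {χ : G →* ℂˣ}
    (hχ : χ ≠ 1) :
    charSum ((collinearityGraph 𝓛).neighborFinset 1) χ = (s - α : ℤ) ∨
      charSum ((collinearityGraph 𝓛).neighborFinset 1) χ = (-(t + 1) : ℤ) := by
  refine (hpg.isSRGWith_collinearityGraph.isPartialDifferenceSet_neighborFinset_one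
    hpg.collinearityGraph_adj_mul_iff).charSum_eq_or_eq ?_ ?_ hχ
  · push_cast [Nat.cast_sub (Nat.one_le_iff_ne_zero.2 hs.ne'),
      Nat.cast_sub (Nat.one_le_iff_ne_zero.2 hα.ne')]
    ring
  · rw [hpg.card_neighborFinset]
    push_cast
    ring

end IsPGSinger

theorem rigid_type_dvd_points_general
    (G : Type*) [CommGroup G] [Fintype G] [DecidableEq G]
    (s t α : ℕ) (hα2 : 2 ≤ α) (hαs : α < s) (hαt : α < t)
    (𝓛 : Set (Finset G)) (hpg : IsPGSinger G 𝓛 s t α) :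
    Nat.card G * α = (s + 1) * (s * t + α) ∧ (s + t - α + 1) ∣ Nat.card G := by
  rw [Nat.card_eq_fintype_card]
  refine ⟨hpg.card_mul_eq (by omega) hαs.le, ?_⟩
  set D := (collinearityGraph 𝓛).neighborFinset 1
  obtain ⟨a, ha⟩ : D.Nonempty :=
    card_pos.1 (hpg.card_neighborFinset 1 ▸ Nat.mul_pos (by omega) (by omega))
  obtain ⟨b, -, hb⟩ : ∃ b ∈ univ, b ∉ insert 1 D := by
    refine exists_mem_notMem_of_card_lt_card ((card_insert_le 1 D).trans_lt ?_)
    rw [hpg.card_neighborFinset, card_univ]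
    exact hpg.card_neighborFinset_add_one_lt (by omega) hαs (by omega)
  rw [mem_insert, not_or] at hb
  have hdvd := sub_dvd_card_of_charSum_eq_or_eq
    (fun χ ↦ hpg.charSum_neighborFinset_one_eq_or_eq (by omega) (by omega))
    ha (ne_of_mem_of_not_mem ha (notMem_neighborFinset_self _ 1)) hb.2 hb.1
  have hcast : ((s + t - α + 1 : ℕ) : ℤ) = (s - α : ℤ) - (-(t + 1) : ℤ) := by
    push_cast [Nat.cast_sub (show α ≤ s + t by omega)]
    ring
  exact Int.natCast_dvd_natCast.1 (hcast ▸ hdvd)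

/-- for a proper `pg(s,t,α)` of rigid type with abelian Singer group `G`,
the number of points `v = |G|` satisfies `v·α = (s+1)(st+α)` and `s+t-α+1` divides `v`. -/
theorem rigid_type_dvd_points
    (G : Type*) [CommGroup G] [Fintype G] [DecidableEq G]
    (s t α : ℕ) (hα2 : 2 ≤ α) (hαs : α < s) (hαt : α < t)
    (𝓛 : Set (Finset G)) (hpg : IsPGSinger G 𝓛 s t α) (hrig : RigidType G 𝓛) :
    Nat.card G * α = (s + 1) * (s * t + α) ∧ (s + t - α + 1) ∣ Nat.card G :=
  rigid_type_dvd_points_general G s t α hα2 hαs hαt 𝓛 hpg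
end
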